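/- Let G be a finite abelian group of order n. Then E(G) = D(G) + n − 1, where D(G) is the Davenport constant and E(G) is the least k such that every sequence of k elements in G has a zero-sum subsequence of length exactly n. -/

import Mathlib

/-!
Let `S` be a sequence of length `|G| + D(G) - 1` and `h` the largest multiplicity of a value in
`S`; translating, that value is `0`. A sequence of at least `|G|` nonzero terms, each value
occurring at most `h` times, has a nonempty zero-sum subsequence of length at most `h`: otherwise,
peeling it into `h` layers of distinct terms and applying Scherk's theorem
(`|A + B| ≥ |A| + |B| - 1` when `0 = a + b` only for `a = b = 0`) layer by layer, the sums of at
most `h` terms would take more than `|G|` values. Remove such short zero-sum blocks from the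
nonzero terms of `S` until their total length reaches `|G| - h`, or fewer than `|G|` nonzero terms
remain. In the second case the rest contains fewer than `D(G)` terms with the same sum as the
whole rest, so all nonzero terms of `S` but fewer than `D(G)` add up to zero; either way we get
a zero sum of length between `|G| - h` and `|G|`, which the `h` zeros pad to length `|G|`.
Conversely, a zero-sum free sequence of length `D(G) - 1` padded with `|G| - 1` zeros has no zero
sum of length `|G|`.
-/

open Finset Pointwise

lemma exists_injOn_card_filter_sdiff_lt {ι β : Type*} [DecidableEq ι] [DecidableEq β] (y : ι → β)
    (U : Finset ι) : ∃ L ⊆ U, Set.InjOn y L ∧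
      ∀ i ∈ U \ L, #{j ∈ U \ L | y j = y i} < #{j ∈ U | y j = y i} := by
  obtain ⟨L, hLU, hinj, himage⟩ := exists_subset_injOn_image_eq_of_surjOn (U : Set ι)
    (U.image y) (fun g hg => by simpa using hg)
  refine ⟨L, coe_subset.1 hLU, hinj, fun i hi => card_lt_card ?_⟩
  obtain ⟨l, hl, hli⟩ := mem_image.1 (himage ▸ mem_image_of_mem y (sdiff_subset hi))
  exact (ssubset_iff_of_subset (filter_subset_filter _ sdiff_subset)).2
    ⟨l, by simp [hl, coe_subset.1 hLU hl, hli]⟩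

section

variable {G : Type*} [AddCommGroup G]

theorem scherk_card_add [DecidableEq G] {A B : Finset G} (hA : 0 ∈ A) (hB : 0 ∈ B)
    (h : ∀ a ∈ A, ∀ b ∈ B, a + b = 0 → a = 0 ∧ b = 0) :
    #A + #B ≤ #(A + B) + 1 := by
  induction B using Finset.strongInduction generalizing A with
  | H B ih =>
  obtain hB0 | ⟨b, hbB, hb0⟩ : B = {0} ∨ ∃ b ∈ B, b ≠ 0 := by
    by_cases hb : ∃ b ∈ B, b ≠ 0
    · exact Or.inr hb
    · push Not at hb
      exact Or.inl (eq_singleton_iff_unique_mem.2 ⟨hB, hb⟩)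
  · simp [hB0]
  -- if every translate `e +ᵥ B` with `e ∈ A` stayed inside `A`, then `A` would be stable
  -- under adding `b`, hence contain `-b`, giving the forbidden representation `-b + b = 0`
  obtain ⟨e, heA, heB⟩ : ∃ e ∈ A, ¬ e +ᵥ B ⊆ A := by
    by_contra! hsub
    have hbA : b +ᵥ A = A := eq_of_subset_of_card_le
      (fun x hx => by
        obtain ⟨a, ha, rfl⟩ := mem_vadd_finset.1 hx
        exact hsub a ha (mem_vadd_finset.2 ⟨b, hbB, add_comm a b⟩))
      (card_vadd_finset b A).ge
    obtain ⟨a, ha, hab⟩ := mem_vadd_finset.1 (hbA.symm ▸ hA)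
    exact hb0 (h a ha b hbB (by rwa [vadd_eq_add, add_comm] at hab)).2
  set x := addDysonETransform e (A, B)
  have hx2B : x.2 ⊂ B := ssubset_of_subset_of_ne inter_subset_left
    fun hxB => heB (vadd_finset_subset_iff.2 (inter_eq_left.1 hxB))
  have hx1 : 0 ∈ x.1 := mem_union_left _ hA
  have hx2 : 0 ∈ x.2 := mem_inter.2 ⟨hB, by simpa [mem_neg_vadd_finset_iff] using heA⟩
  have hx : ∀ a ∈ x.1, ∀ b ∈ x.2, a + b = 0 → a = 0 ∧ b = 0 := by
    intro a ha b hb hab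
    obtain ⟨hbB, hbA⟩ : b ∈ B ∧ e + b ∈ A := by
      simpa [x, mem_neg_vadd_finset_iff] using hb
    obtain haA | ha := mem_union.1 ha
    · exact h a haA b hbB hab
    obtain ⟨c, hcB, rfl⟩ := mem_vadd_finset.1 ha
    obtain ⟨heb, rfl⟩ := h _ hbA c hcB (by rw [← hab, vadd_eq_add]; abel)
    obtain ⟨rfl, rfl⟩ := h e heA b hbB heb
    simp
  calc #A + #B = #x.1 + #x.2 := (addDysonETransform.card e (A, B)).symm
    _ ≤ #(x.1 + x.2) + 1 := ih x.2 hx2B hx1 hx2 hx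
    _ ≤ #(A + B) + 1 := by grw [addDysonETransform.subset e (A, B)]

variable {ι : Type*}

def subsetSumsOfCardLE [DecidableEq G] (y : ι → G) (U : Finset ι) (h : ℕ) : Finset G :=
  {C ∈ U.powerset | #C ≤ h}.image fun C => ∑ i ∈ C, y i

lemma mem_subsetSumsOfCardLE [DecidableEq G] {y : ι → G} {U : Finset ι} {h : ℕ} {g : G} :
    g ∈ subsetSumsOfCardLE y U h ↔ ∃ C ⊆ U, #C ≤ h ∧ ∑ i ∈ C, y i = g := by
  simp [subsetSumsOfCardLE, and_assoc]

lemma zero_mem_subsetSumsOfCardLE [DecidableEq G] (y : ι → G) (U : Finset ι) (h : ℕ) :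
    0 ∈ subsetSumsOfCardLE y U h :=
  mem_subsetSumsOfCardLE.2 ⟨∅, empty_subset U, by simp, sum_empty⟩

lemma subsetSumsOfCardLE_sdiff_add_subset [DecidableEq ι] [DecidableEq G] {y : ι → G} {h : ℕ}
    {U L : Finset ι} (hLU : L ⊆ U) :
    subsetSumsOfCardLE y (U \ L) h + insert 0 (L.image y) ⊆ subsetSumsOfCardLE y U (h + 1) := by
  intro g hg
  obtain ⟨a, ha, b, hb, rfl⟩ := mem_add.1 hg
  obtain ⟨C, hC, hCh, rfl⟩ := mem_subsetSumsOfCardLE.1 ha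
  obtain rfl | hb := mem_insert.1 hb
  · exact mem_subsetSumsOfCardLE.2 ⟨C, hC.trans sdiff_subset, by omega, (add_zero _).symm⟩
  obtain ⟨l, hl, rfl⟩ := mem_image.1 hb
  have hlC : l ∉ C := fun hlC => (mem_sdiff.1 (hC hlC)).2 hl
  exact mem_subsetSumsOfCardLE.2 ⟨insert l C, insert_subset (hLU hl) (hC.trans sdiff_subset),
    (card_insert_le l C).trans (by omega), by rw [sum_insert hlC, add_comm]⟩

theorem card_lt_card_subsetSumsOfCardLE [DecidableEq ι] [DecidableEq G] {y : ι → G} (h : ℕ)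
    {U : Finset ι} (hy : ∀ i ∈ U, y i ≠ 0) (hmult : ∀ i ∈ U, #{j ∈ U | y j = y i} ≤ h)
    (hfree : ∀ C ⊆ U, C.Nonempty → #C ≤ h → ∑ i ∈ C, y i ≠ 0) :
    #U < #(subsetSumsOfCardLE y U h) := by
  induction h generalizing U with
  | zero =>
    have hU : U = ∅ := eq_empty_of_forall_notMem fun i hi => by
      have : i ∈ ({j ∈ U | y j = y i} : Finset ι) := mem_filter.2 ⟨hi, rfl⟩
      simpa using (card_pos.2 ⟨i, this⟩).trans_le (hmult i hi)
    rw [hU, card_empty]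
    exact card_pos.2 ⟨0, zero_mem_subsetSumsOfCardLE y ∅ 0⟩
  | succ h ih =>
    -- `L` takes each value of `y` on `U` once; Scherk's theorem for the sums of at most `h`
    -- terms of `U \ L` and the set `{0} ∪ y(L)` adds `#L` to the bound
    obtain ⟨L, hLU, hinj, hLmult⟩ := exists_injOn_card_filter_sdiff_lt y U
    set A := subsetSumsOfCardLE y (U \ L) h
    set B := insert 0 (L.image y)
    have hA : #(U \ L) < #A := by
      refine ih (fun i hi => hy i (sdiff_subset hi)) (fun i hi => ?_)
        (fun C hC hCne hCh => hfree C (hC.trans sdiff_subset) hCne (by omega))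
      have := hLmult i hi
      have := hmult i (sdiff_subset hi)
      omega
    have hB : #B = #L + 1 := by
      rw [card_insert_of_notMem, card_image_of_injOn hinj]
      simp only [mem_image, not_exists, not_and]
      exact fun i hi => hy i (hLU hi)
    have hzero : ∀ a ∈ A, ∀ b ∈ B, a + b = 0 → a = 0 ∧ b = 0 := by
      intro a ha b hb hab
      obtain rfl | hb := mem_insert.1 hb
      · exact ⟨by simpa using hab, rfl⟩
      obtain ⟨C, hC, hCh, rfl⟩ := mem_subsetSumsOfCardLE.1 ha
      obtain ⟨l, hl, rfl⟩ := mem_image.1 hb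
      have hlC : l ∉ C := fun hlC => (mem_sdiff.1 (hC hlC)).2 hl
      refine absurd ?_ (hfree (insert l C) (insert_subset (hLU hl) (hC.trans sdiff_subset))
        (insert_nonempty l C) ((card_insert_le l C).trans (by omega)))
      rw [sum_insert hlC, add_comm, hab]
    have : #A + #B ≤ #(A + B) + 1 :=
      scherk_card_add (zero_mem_subsetSumsOfCardLE y (U \ L) h) (mem_insert_self 0 _) hzero
    have : #(A + B) ≤ #(subsetSumsOfCardLE y U (h + 1)) :=
      card_le_card (subsetSumsOfCardLE_sdiff_add_subset hLU)
    have := card_sdiff_add_card_eq_card hLU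
    omega

theorem exists_zero_sum_card_le_of_card_le [Fintype G] [DecidableEq ι] [DecidableEq G]
    {y : ι → G} {h : ℕ} {U : Finset ι} (hy : ∀ i ∈ U, y i ≠ 0)
    (hmult : ∀ i ∈ U, #{j ∈ U | y j = y i} ≤ h) (hU : Fintype.card G ≤ #U) :
    ∃ C ⊆ U, C.Nonempty ∧ #C ≤ h ∧ ∑ i ∈ C, y i = 0 := by
  by_contra! hfree
  exact ((card_lt_card_subsetSumsOfCardLE h hy hmult hfree).trans_le (card_le_univ _)).not_ge hU

theorem exists_zero_sum_of_davenport {D : ℕ}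
    (hD : ∀ y : Fin D → G, ∃ s : Finset (Fin D), s.Nonempty ∧ ∑ i ∈ s, y i = 0)
    (y : ι → G) {R : Finset ι} (hR : D ≤ #R) : ∃ C ⊆ R, C.Nonempty ∧ ∑ i ∈ C, y i = 0 := by
  let f : Fin D ↪ ι := (Fin.castLEEmb hR).trans (R.equivFin.symm.toEmbedding.trans (.subtype _))
  obtain ⟨s, hs, hsum⟩ := hD (y ∘ f)
  refine ⟨s.map f, fun i hi => ?_, hs.map, by rwa [sum_map]⟩
  obtain ⟨j, -, rfl⟩ := mem_map.1 hi
  exact (R.equivFin.symm _).2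

theorem exists_subset_card_lt_sum_eq [DecidableEq ι] {D : ℕ} {y : ι → G}
    (hD : ∀ R : Finset ι, D ≤ #R → ∃ C ⊆ R, C.Nonempty ∧ ∑ i ∈ C, y i = 0) (R : Finset ι) :
    ∃ X ⊆ R, #X < D ∧ ∑ i ∈ X, y i = ∑ i ∈ R, y i := by
  induction R using Finset.strongInduction with
  | H R ih =>
  by_cases hR : #R < D
  · exact ⟨R, Subset.rfl, hR, rfl⟩
  obtain ⟨C, hCR, hC, hCsum⟩ := hD R (not_lt.1 hR)
  obtain ⟨X, hX, hXD, hXsum⟩ := ih (R \ C) (sdiff_ssubset hCR hC)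
  refine ⟨X, hX.trans sdiff_subset, hXD, ?_⟩
  rw [hXsum, ← sum_sdiff hCR, hCsum, add_zero]

theorem exists_zero_sum_subset_of_short_zero_sums [DecidableEq ι] {D n h : ℕ} {y : ι → G}
    {T : Finset ι}
    (hD : ∀ R : Finset ι, D ≤ #R → ∃ C ⊆ R, C.Nonempty ∧ ∑ i ∈ C, y i = 0)
    (hshort : ∀ R ⊆ T, n ≤ #R → ∃ C ⊆ R, C.Nonempty ∧ #C ≤ h ∧ ∑ i ∈ C, y i = 0) :
    ∀ R ⊆ T, ∃ s ⊆ R, ∑ i ∈ s, y i = 0 ∧ #s ≤ n ∧ (n ≤ #s + h ∨ #R < #s + D) := by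
  intro R
  induction R using Finset.strongInduction with
  | H R ih =>
  intro hRT
  by_cases hR : #R < n
  · obtain ⟨X, hXR, hXD, hXsum⟩ := exists_subset_card_lt_sum_eq hD R
    have := card_sdiff_add_card_eq_card hXR
    refine ⟨R \ X, sdiff_subset, ?_, by omega, Or.inr (by omega)⟩
    rw [← add_eq_right, sum_sdiff hXR, hXsum]
  obtain ⟨C, hCR, hC, hCh, hCsum⟩ := hshort R hRT (not_lt.1 hR)
  obtain ⟨s, hsR, hsum, hsn, hs⟩ := ih (R \ C) (sdiff_ssubset hCR hC) (sdiff_subset.trans hRT)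
  by_cases hwin : n ≤ #s + h
  · exact ⟨s, hsR.trans sdiff_subset, hsum, hsn, Or.inl hwin⟩
  have hdisj : Disjoint s C := disjoint_of_subset_left hsR sdiff_disjoint
  have := card_sdiff_add_card_eq_card hCR
  refine ⟨s ∪ C, union_subset (hsR.trans sdiff_subset) hCR, ?_, ?_, Or.inr ?_⟩
  · rw [sum_union hdisj, hsum, hCsum, add_zero]
  all_goals rw [card_union_of_disjoint hdisj]; omega

theorem exists_zero_sum_card_eq_of_zero_most_frequent [Fintype G] [DecidableEq ι] [DecidableEq G]
    {D : ℕ} {y : ι → G} {U : Finset ι}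
    (hD : ∀ R : Finset ι, D ≤ #R → ∃ C ⊆ R, C.Nonempty ∧ ∑ i ∈ C, y i = 0)
    (hmax : ∀ g, #{i ∈ U | y i = g} ≤ #{i ∈ U | y i = 0}) (hU : D + Fintype.card G ≤ #U + 1) :
    ∃ s ⊆ U, #s = Fintype.card G ∧ ∑ i ∈ s, y i = 0 := by
  set Z := {i ∈ U | y i = 0}
  set T := {i ∈ U | y i ≠ 0}
  have hZT : #Z + #T = #U := card_filter_add_card_filter_not _
  have hshort : ∀ R ⊆ T, Fintype.card G ≤ #R →
      ∃ C ⊆ R, C.Nonempty ∧ #C ≤ #Z ∧ ∑ i ∈ C, y i = 0 := fun R hRT hR =>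
    exists_zero_sum_card_le_of_card_le (fun i hi => (mem_filter.1 (hRT hi)).2)
      (fun i _ => (card_le_card (filter_subset_filter _ (hRT.trans (filter_subset _ _)))).trans
        (hmax (y i))) hR
  obtain ⟨s, hsT, hsum, hsn, hs⟩ := exists_zero_sum_subset_of_short_zero_sums hD hshort T Subset.rfl
  obtain ⟨W, hWZ, hW⟩ := exists_subset_card_eq (s := Z) (n := Fintype.card G - #s) (by omega)
  have hdisj : Disjoint s W :=
    disjoint_of_subset_left hsT
      (disjoint_of_subset_right hWZ (disjoint_filter_filter_not _ _ _).symm)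
  refine ⟨s ∪ W, union_subset (hsT.trans (filter_subset _ _)) (hWZ.trans (filter_subset _ _)),
    by rw [card_union_of_disjoint hdisj]; omega, ?_⟩
  rw [sum_union hdisj, hsum, zero_add]
  exact sum_eq_zero fun i hi => (mem_filter.1 (hWZ hi)).2

theorem exists_zero_sum_card_eq_of_davenport [Fintype G] {D : ℕ}
    (hD : ∀ y : Fin D → G, ∃ s : Finset (Fin D), s.Nonempty ∧ ∑ i ∈ s, y i = 0)
    (y : ι → G) {U : Finset ι} (hU : D + Fintype.card G ≤ #U + 1) :
    ∃ s ⊆ U, #s = Fintype.card G ∧ ∑ i ∈ s, y i = 0 := by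
  classical
  -- translating by the most frequent value `g₀` makes `0` the most frequent value, and does not
  -- change the sum of a subsequence of length `|G|`
  obtain ⟨g₀, -, hg₀⟩ := exists_max_image univ (fun g => #{i ∈ U | y i = g}) univ_nonempty
  obtain ⟨s, hsU, hs, hsum⟩ := exists_zero_sum_card_eq_of_zero_most_frequent
    (y := fun i => y i - g₀) (fun R => exists_zero_sum_of_davenport hD _)
    (fun g => by simpa [sub_eq_iff_eq_add] using hg₀ (g + g₀) (mem_univ _)) hU
  refine ⟨s, hsU, hs, ?_⟩
  rwa [sum_sub_distrib, sum_const, hs, card_nsmul_eq_zero, sub_zero] at hsum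

theorem davenport_of_zero_sum_card_eq {m l n : ℕ} (hln : l < n)
    (hk : ∀ y : Fin (m + l) → G, ∃ s : Finset (Fin (m + l)), #s = n ∧ ∑ i ∈ s, y i = 0)
    (w : Fin m → G) : ∃ s : Finset (Fin m), s.Nonempty ∧ ∑ i ∈ s, w i = 0 := by
  -- pad `w` with `l` zeros: a zero sum of length `n > l` must use some term of `w`
  obtain ⟨s, hs, hsum⟩ := hk (Sum.elim w 0 ∘ finSumFinEquiv.symm)
  set t := s.map finSumFinEquiv.symm.toEmbedding
  have ht : ∑ x ∈ t, Sum.elim w 0 x = 0 := by rwa [sum_map]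
  rw [sum_sum_eq_sum_toLeft_add_sum_toRight] at ht
  have hcard := card_toLeft_add_card_toRight (u := t)
  have hright : #t.toRight ≤ l := (card_le_univ _).trans_eq (Fintype.card_fin l)
  rw [card_map, hs] at hcard
  exact ⟨t.toLeft, card_pos.1 (by omega), by simpa using ht⟩

end

/-- Gao's theorem: `E(G) = D(G) + n - 1` for a finite abelian group of order `n`. -/
theorem gao_theorem {G : Type*} [AddCommGroup G] [Fintype G]
    (n : ℕ) (hn : n = Fintype.card G) (D E : ℕ)
    (hD : IsLeast {k : ℕ | ∀ y : Fin k → G, ∃ s : Finset (Fin k),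
      s.Nonempty ∧ ∑ i ∈ s, y i = 0} D)
    (hE : IsLeast {k : ℕ | ∀ y : Fin k → G, ∃ s : Finset (Fin k),
      s.card = n ∧ ∑ i ∈ s, y i = 0} E) :
    E = D + n - 1 := by
  classical
  subst hn
  have hG : 0 < Fintype.card G := Fintype.card_pos
  have hupper : E ≤ D + Fintype.card G - 1 := hE.2 fun y => by
    obtain ⟨s, -, hs⟩ := exists_zero_sum_card_eq_of_davenport hD.1 y (U := univ)
      (by rw [card_univ, Fintype.card_fin]; omega)
    exact ⟨s, hs⟩
  have hnE : Fintype.card G ≤ E := by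
    obtain ⟨s, hs, -⟩ := hE.1 0
    simpa [hs] using card_le_univ s
  obtain ⟨m, rfl⟩ : ∃ m, E = m + (Fintype.card G - 1) := ⟨E - (Fintype.card G - 1), by omega⟩
  have hDm : D ≤ m := hD.2 (davenport_of_zero_sum_card_eq (by omega) hE.1)
  omega
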